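/- arXiv:2410.11675 — 7 statements merged into one kernel-verified Lean document; each statement's English description precedes it below -/
import Mathlib

section
/- Let S = C[x0, ..., xd] and let ℓ0, ..., ℓ_{d+1} be d+2 linear forms in S such that every subset of d+1 of them is linearly independent. Then the set of pairwise products {ℓi * ℓj : 0 <= i < j <= d+1}, consisting of binom(d+2, 2) quadratic forms, is linearly independent in the space S_2 of quadratic forms. -/
/-!
View the linear forms as functionals on points of `ℂ^{d+1}`. For `k < l`, the `d` forms other
than `ℓ k, ℓ l` have a common nonzero zero `x`. Neither `ℓ k` nor `ℓ l` vanishes at `x`, since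
otherwise `d + 1` independent forms, which span the dual space, would all vanish at `x ≠ 0`.
Evaluating a linear relation among the products `ℓ i * ℓ j` at `x` kills every term but the one
of `ℓ k * ℓ l`, whose coefficient is therefore zero.
-/

open Module MvPolynomial

section Duality

variable {K W ι : Type*} [Field K] [AddCommGroup W] [Module K W] [FiniteDimensional K W]
  [Fintype ι]

theorem exists_ne_zero_forall_dual_apply_eq_zero (φ : ι → Dual K W)
    (hcard : Fintype.card ι < finrank K W) : ∃ x ≠ 0, ∀ i, φ i x = 0 := by
  obtain ⟨x, hx, hx0⟩ := Submodule.exists_mem_ne_zero_of_ne_bot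
    (LinearMap.ker_ne_bot_of_finrank_lt (f := LinearMap.pi φ) (by simpa using hcard))
  exact ⟨x, hx0, fun i => congrFun (LinearMap.mem_ker.1 hx) i⟩

theorem LinearIndependent.eq_zero_of_forall_dual_apply_eq_zero {φ : ι → Dual K W}
    (hφ : LinearIndependent K φ) (hcard : Fintype.card ι = finrank K W) {x : W}
    (hx : ∀ i, φ i x = 0) : x = 0 := by
  have hspan := hφ.span_eq_top_of_card_eq_finrank' (hcard.trans Subspace.dual_finrank_eq.symm)
  have heval : Dual.eval K W x = 0 := LinearMap.ext_on_range hspan hx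
  exact (forall_dual_apply_eq_zero_iff K x).1 (LinearMap.congr_fun heval)

theorem exists_dual_apply_eq_zero_off_pair [DecidableEq ι] (φ : ι → Dual K W)
    (hcard : Fintype.card ι = finrank K W + 1)
    (hφ : ∀ a, LinearIndependent K (fun i : ({a}ᶜ : Finset ι) => φ i)) {k l : ι} (hkl : k ≠ l) :
    ∃ x, (∀ i, i ≠ k → i ≠ l → φ i x = 0) ∧ φ k x ≠ 0 ∧ φ l x ≠ 0 := by
  have hcard_compl_pair : Fintype.card ({k, l}ᶜ : Finset ι) < finrank K W := by
    have := Fintype.one_lt_card_iff.2 ⟨k, l, hkl⟩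
    rw [Fintype.card_coe, Finset.card_compl, Finset.card_pair hkl]
    omega
  have hcard_compl_singleton a : Fintype.card ({a}ᶜ : Finset ι) = finrank K W := by
    rw [Fintype.card_coe, Finset.card_compl, Finset.card_singleton, hcard, Nat.add_sub_cancel]
  obtain ⟨x, hx0, hx⟩ :=
    exists_ne_zero_forall_dual_apply_eq_zero (fun i : ({k, l}ᶜ : Finset ι) => φ i)
      hcard_compl_pair
  have hx' : ∀ i, i ≠ k → i ≠ l → φ i x = 0 := fun i hik hil => hx ⟨i, by simp [hik, hil]⟩
  have hne : ∀ a, ¬ ∀ i, i ≠ a → φ i x = 0 := fun a ha =>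
    hx0 <| (hφ a).eq_zero_of_forall_dual_apply_eq_zero (hcard_compl_singleton a)
      fun i => ha i (Finset.notMem_singleton.1 (Finset.mem_compl.1 i.2))
  refine ⟨x, hx', fun hk => hne l fun i hil => ?_, fun hl => hne k fun i hik => ?_⟩
  · by_cases hik : i = k
    · rwa [hik]
    · exact hx' i hik hil
  · by_cases hil : i = l
    · rwa [hil]
    · exact hx' i hik hil

end Duality

theorem MvPolynomial.IsHomogeneous.isLinearMap_eval {R σ : Type*} [CommSemiring R]
    {p : MvPolynomial σ R} (hp : p.IsHomogeneous 1) :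
    IsLinearMap R (fun x : σ → R => eval x p) := by
  rw [← mem_homogeneousSubmodule, homogeneousSubmodule_one_eq_span_X] at hp
  induction hp using Submodule.span_induction with
  | mem q hq =>
    obtain ⟨j, rfl⟩ := hq
    exact ⟨fun x y => by simp, fun c x => by simp⟩
  | zero => exact ⟨fun x y => by simp, fun c x => by simp⟩
  | add q r _ _ hq hr =>
    exact ⟨fun x y => by simp [hq.map_add, hr.map_add, add_add_add_comm],
      fun c x => by simp [hq.map_smul, hr.map_smul, mul_add]⟩
  | smul c q _ hq =>
    exact ⟨fun x y => by simp [smul_eval, hq.map_add, mul_add],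
      fun a x => by simp [smul_eval, hq.map_smul, mul_left_comm]⟩

theorem LinearIndependent.dual_of_eval {K σ ι : Type*} [Field K] [Infinite K]
    {v : ι → MvPolynomial σ K} (hv : LinearIndependent K v) {φ : ι → Dual K (σ → K)}
    (hφ : ∀ i x, φ i x = eval x (v i)) : LinearIndependent K φ := by
  have hinj : Function.Injective (evalₗ K σ) := fun p q h => funext fun x => congrFun h x
  refine .of_comp (LinearMap.ltoFun K (σ → K) K K) ?_
  have hcomp : LinearMap.ltoFun K (σ → K) K K ∘ φ = evalₗ K σ ∘ v := by
    ext i x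
    exact hφ i x
  rw [hcomp]
  exact hv.map' _ (LinearMap.ker_eq_bot.2 hinj)

theorem linearIndependent_mul_of_forall_exists_algHom {K A ι : Type*} [CommRing K] [IsDomain K]
    [Ring A] [Algebra K A] [LinearOrder ι] (f : ι → A)
    (h : ∀ k l, k < l → ∃ χ : A →ₐ[K] K,
      (∀ i, i ≠ k → i ≠ l → χ (f i) = 0) ∧ χ (f k) ≠ 0 ∧ χ (f l) ≠ 0) :
    LinearIndependent K (fun p : {p : ι × ι // p.1 < p.2} => f p.1.1 * f p.1.2) := by
  rw [linearIndependent_iff']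
  rintro s g hg ⟨⟨k, l⟩, hkl⟩ hq
  obtain ⟨χ, h0, hk, hl⟩ := h k l hkl
  have hvanish : ∀ p : {p : ι × ι // p.1 < p.2}, p ≠ ⟨(k, l), hkl⟩ →
      χ (f p.1.1 * f p.1.2) = 0 := by
    rintro ⟨⟨i, j⟩, hij⟩ hne
    rw [map_mul]
    by_cases hi : i ≠ k ∧ i ≠ l
    · rw [h0 i hi.1 hi.2, zero_mul]
    by_cases hj : j ≠ k ∧ j ≠ l
    · rw [h0 j hj.1 hj.2, mul_zero]
    -- both ends lie in `{k, l}` and `i < j`, so `(i, j) = (k, l)`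
    grind
  have hχ := congrArg χ hg
  rw [map_sum, Finset.sum_eq_single_of_mem _ hq fun p _ hp => by rw [map_smul, hvanish p hp,
    smul_zero], map_smul, map_mul, map_zero, smul_eq_mul] at hχ
  exact (mul_eq_zero.1 hχ).resolve_right (mul_ne_zero hk hl)

/-- If any `d+1` of the `d+2` linear forms `ℓ 0, …, ℓ (d+1)` in `d+1` variables are
linearly independent, then the pairwise products `ℓ i * ℓ j` (for `i < j`) are linearly
independent quadratic forms. -/
theorem stmt_3 (d : ℕ) (ℓ : Fin (d+2) → MvPolynomial (Fin (d+1)) ℂ)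
    (hhom : ∀ i, (ℓ i).IsHomogeneous 1)
    (hgen : ∀ s : Finset (Fin (d+2)), s.card = d + 1 →
      LinearIndependent ℂ (fun i : s => ℓ i.1)) :
    LinearIndependent ℂ
      (fun p : {p : Fin (d+2) × Fin (d+2) // p.1 < p.2} => ℓ p.1.1 * ℓ p.1.2) := by
  let φ i : Dual ℂ (Fin (d+1) → ℂ) := (hhom i).isLinearMap_eval.mk'
  have hφ a : LinearIndependent ℂ (fun i : ({a}ᶜ : Finset _) => φ i) :=
    (hgen _ (by simp [Finset.card_compl])).dual_of_eval fun _ _ => rfl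
  refine linearIndependent_mul_of_forall_exists_algHom ℓ fun k l hkl => ?_
  obtain ⟨x, hx⟩ := exists_dual_apply_eq_zero_off_pair φ (by simp) hφ hkl.ne
  exact ⟨aeval x, hx⟩
end

section
/- Let b_0, ..., b_n be distinct complex numbers, n ≥ 2, and let g1(u; x) = Σ_i u_i / (x + b_i) and g2(u; x) = Σ_i u_i / (x + b_i)^2. For any fixed x, y ∈ C \ {-b_0, ..., -b_n} with x ≠ y, the set of u ∈ C^{n+1} satisfying the four linear equations g1(u;x) = g2(u;x) = g1(u;y) = g2(u;y) = 0 is a linear subspace of C^{n+1} of dimension exactly n - 3 (in particular, dimension at most n - 3, so it is zero when n ≤ 3). -/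
open Matrix

private lemma detC_eq (x y b0 b1 b2 : ℂ) :
    (!![(x+b1)*(x+b2), (x+b0)*(x+b2), (x+b0)*(x+b1);
        ((x+b1)*(x+b2))^2, ((x+b0)*(x+b2))^2, ((x+b0)*(x+b1))^2;
        (y+b1)*(y+b2), (y+b0)*(y+b2), (y+b0)*(y+b1)]).det
      = (x-y)^2 * ((b0-b1)*(b0-b2)*(b1-b2)) * ((x+b0)*(x+b1)*(x+b2)) := by
  rw [Matrix.det_fin_three]
  simp only [Matrix.cons_val', Matrix.cons_val_zero, Matrix.cons_val_one, Matrix.head_cons,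
    Matrix.cons_val_two, Matrix.tail_cons, Matrix.empty_val', Matrix.cons_val_fin_one,
    Matrix.head_fin_const, Matrix.of_apply]
  ring

set_option maxHeartbeats 1000000 in
private lemma key4 (x y : ℂ) (c : Fin 4 → ℂ) (hc : Function.Injective c)
    (hx : ∀ i, x + c i ≠ 0) (hy : ∀ i, y + c i ≠ 0) (hxy : x ≠ y)
    (v : Fin 4 → ℂ)
    (h : ∀ k, (x + c k)⁻¹ * v 0 + ((x + c k)^2)⁻¹ * v 1
      + (y + c k)⁻¹ * v 2 + ((y + c k)^2)⁻¹ * v 3 = 0) :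
    v = 0 := by
  have d01 : c 0 - c 1 ≠ 0 := sub_ne_zero.2 (fun h => (by decide : (0:Fin 4) ≠ 1) (hc h))
  have d02 : c 0 - c 2 ≠ 0 := sub_ne_zero.2 (fun h => (by decide : (0:Fin 4) ≠ 2) (hc h))
  have d03 : c 0 - c 3 ≠ 0 := sub_ne_zero.2 (fun h => (by decide : (0:Fin 4) ≠ 3) (hc h))
  have d12 : c 1 - c 2 ≠ 0 := sub_ne_zero.2 (fun h => (by decide : (1:Fin 4) ≠ 2) (hc h))
  have d13 : c 1 - c 3 ≠ 0 := sub_ne_zero.2 (fun h => (by decide : (1:Fin 4) ≠ 3) (hc h))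
  have d23 : c 2 - c 3 ≠ 0 := sub_ne_zero.2 (fun h => (by decide : (2:Fin 4) ≠ 3) (hc h))
  have hxy' : x - y ≠ 0 := sub_ne_zero.2 hxy
  have hyx' : y - x ≠ 0 := sub_ne_zero.2 (Ne.symm hxy)
  have hD : (c 0 - c 1)*(c 0 - c 2)*(c 0 - c 3)*(c 1 - c 2)*(c 1 - c 3)*(c 2 - c 3) ≠ 0 :=
    mul_ne_zero (mul_ne_zero (mul_ne_zero (mul_ne_zero (mul_ne_zero d01 d02) d03) d12) d13) d23
  have E : ∀ k, v 0 * ((x + c k) * (y + c k)^2) + v 1 * (y + c k)^2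
      + v 2 * ((x + c k)^2 * (y + c k)) + v 3 * (x + c k)^2 = 0 := by
    intro k
    have i1 : (x + c k) * (x + c k)⁻¹ = 1 := mul_inv_cancel₀ (hx k)
    have i1' : (x + c k)^2 * ((x + c k)^2)⁻¹ = 1 := mul_inv_cancel₀ (pow_ne_zero 2 (hx k))
    have i2 : (y + c k) * (y + c k)⁻¹ = 1 := mul_inv_cancel₀ (hy k)
    have i2' : (y + c k)^2 * ((y + c k)^2)⁻¹ = 1 := mul_inv_cancel₀ (pow_ne_zero 2 (hy k))
    linear_combination ((x + c k)^2 * (y + c k)^2) * h k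
      - ((x + c k) * (y + c k)^2 * v 0) * i1
      - ((y + c k)^2 * v 1) * i1'
      - ((x + c k)^2 * (y + c k) * v 2) * i2
      - ((x + c k)^2 * v 3) * i2'
  have hv1 : v 1 = 0 := by
    have h1 : v 1 * ((y - x)^2 *
        ((c 0 - c 1)*(c 0 - c 2)*(c 0 - c 3)*(c 1 - c 2)*(c 1 - c 3)*(c 2 - c 3))) = 0 := by
      linear_combination
        (-((x + c 1)*(x + c 2)*(x + c 3)*((c 1 - c 2)*(c 1 - c 3)*(c 2 - c 3)))) * E 0
        + ((x + c 0)*(x + c 2)*(x + c 3)*((c 0 - c 2)*(c 0 - c 3)*(c 2 - c 3))) * E 1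
        + (-((x + c 0)*(x + c 1)*(x + c 3)*((c 0 - c 1)*(c 0 - c 3)*(c 1 - c 3)))) * E 2
        + ((x + c 0)*(x + c 1)*(x + c 2)*((c 0 - c 1)*(c 0 - c 2)*(c 1 - c 2))) * E 3
    exact (mul_eq_zero.mp h1).resolve_right (mul_ne_zero (pow_ne_zero _ hyx') hD)
  have hv3 : v 3 = 0 := by
    have h3 : v 3 * ((x - y)^2 *
        ((c 0 - c 1)*(c 0 - c 2)*(c 0 - c 3)*(c 1 - c 2)*(c 1 - c 3)*(c 2 - c 3))) = 0 := by
      linear_combination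
        (-((y + c 1)*(y + c 2)*(y + c 3)*((c 1 - c 2)*(c 1 - c 3)*(c 2 - c 3)))) * E 0
        + ((y + c 0)*(y + c 2)*(y + c 3)*((c 0 - c 2)*(c 0 - c 3)*(c 2 - c 3))) * E 1
        + (-((y + c 0)*(y + c 1)*(y + c 3)*((c 0 - c 1)*(c 0 - c 3)*(c 1 - c 3)))) * E 2
        + ((y + c 0)*(y + c 1)*(y + c 2)*((c 0 - c 1)*(c 0 - c 2)*(c 1 - c 2))) * E 3
    exact (mul_eq_zero.mp h3).resolve_right (mul_ne_zero (pow_ne_zero _ hxy') hD)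
  have L0 : v 0 * (y + c 0) + v 2 * (x + c 0) = 0 := by
    have l0 : ((x + c 0) * (y + c 0)) * (v 0 * (y + c 0) + v 2 * (x + c 0)) = 0 := by
      linear_combination E 0 - (y + c 0)^2 * hv1 - (x + c 0)^2 * hv3
    exact (mul_eq_zero.mp l0).resolve_left (mul_ne_zero (hx 0) (hy 0))
  have L1 : v 0 * (y + c 1) + v 2 * (x + c 1) = 0 := by
    have l1 : ((x + c 1) * (y + c 1)) * (v 0 * (y + c 1) + v 2 * (x + c 1)) = 0 := by
      linear_combination E 1 - (y + c 1)^2 * hv1 - (x + c 1)^2 * hv3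
    exact (mul_eq_zero.mp l1).resolve_left (mul_ne_zero (hx 1) (hy 1))
  have hsum : v 0 + v 2 = 0 := by
    have hs : (v 0 + v 2) * (c 0 - c 1) = 0 := by linear_combination L0 - L1
    exact (mul_eq_zero.mp hs).resolve_right d01
  have hv0 : v 0 = 0 := by
    have h0 : v 0 * (y - x) = 0 := by linear_combination L0 - (x + c 0) * hsum
    exact (mul_eq_zero.mp h0).resolve_right hyx'
  have hv2 : v 2 = 0 := by linear_combination hsum - hv0
  funext k
  fin_cases k <;> simpa using by first | exact hv0 | exact hv1 | exact hv2 | exact hv3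

set_option maxHeartbeats 1000000 in
/-- For distinct points `-b₀, …, -b_n` on the line (`n ≥ 2`) and distinct `x ≠ y`
outside the arrangement, the space of `u ∈ ℂ^{n+1}` with
`g1(u;x) = g2(u;x) = g1(u;y) = g2(u;y) = 0` has dimension exactly `n - 3`. -/
theorem stmt_11 (n : ℕ) (hn : 2 ≤ n) (b : Fin (n+1) → ℂ) (hb : Function.Injective b)
    (x y : ℂ) (hx : ∀ i, x + b i ≠ 0) (hy : ∀ i, y + b i ≠ 0) (hxy : x ≠ y) :
    Module.finrank ℂ
      (LinearMap.ker (Matrix.mulVecLin (Matrix.of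
        (![fun i => (x + b i)⁻¹,
           fun i => ((x + b i)^2)⁻¹,
           fun i => (y + b i)⁻¹,
           fun i => ((y + b i)^2)⁻¹] : Fin 4 → Fin (n+1) → ℂ)))) = n - 3 := by
  set A : Matrix (Fin 4) (Fin (n+1)) ℂ := Matrix.of
        (![fun i => (x + b i)⁻¹,
           fun i => ((x + b i)^2)⁻¹,
           fun i => (y + b i)⁻¹,
           fun i => ((y + b i)^2)⁻¹] : Fin 4 → Fin (n+1) → ℂ) with hA
  have hrn := LinearMap.finrank_range_add_finrank_ker A.mulVecLin
  have hdom : Module.finrank ℂ (Fin (n+1) → ℂ) = n + 1 := by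
    simp [Module.finrank_fintype_fun_eq_card]
  have hrange : Module.finrank ℂ (LinearMap.range A.mulVecLin) = A.rank := rfl
  rcases eq_or_lt_of_le hn with h2 | h3
  · -- n = 2 : kernel is trivial
    subst h2
    have hkerbot : LinearMap.ker A.mulVecLin = ⊥ := by
      rw [LinearMap.ker_eq_bot']
      intro u hu
      have hu' : A.mulVec u = 0 := hu
      have e0 : (x + b 0)⁻¹ * u 0 + (x + b 1)⁻¹ * u 1 + (x + b 2)⁻¹ * u 2 = 0 := by
        have := congrFun hu' 0
        simp [hA, Matrix.mulVec, dotProduct, Fin.sum_univ_three] at this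
        linear_combination this
      have e1 : ((x + b 0)^2)⁻¹ * u 0 + ((x + b 1)^2)⁻¹ * u 1 + ((x + b 2)^2)⁻¹ * u 2 = 0 := by
        have := congrFun hu' 1
        simp [hA, Matrix.mulVec, dotProduct, Fin.sum_univ_three] at this
        linear_combination this
      have e2 : (y + b 0)⁻¹ * u 0 + (y + b 1)⁻¹ * u 1 + (y + b 2)⁻¹ * u 2 = 0 := by
        have := congrFun hu' 2
        simp [hA, Matrix.mulVec, dotProduct, Fin.sum_univ_three] at this
        linear_combination this
      have ix0 : (x + b 0) * (x + b 0)⁻¹ = 1 := mul_inv_cancel₀ (hx 0)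
      have ix1 : (x + b 1) * (x + b 1)⁻¹ = 1 := mul_inv_cancel₀ (hx 1)
      have ix2 : (x + b 2) * (x + b 2)⁻¹ = 1 := mul_inv_cancel₀ (hx 2)
      have jx0 : (x + b 0)^2 * ((x + b 0)^2)⁻¹ = 1 := mul_inv_cancel₀ (pow_ne_zero 2 (hx 0))
      have jx1 : (x + b 1)^2 * ((x + b 1)^2)⁻¹ = 1 := mul_inv_cancel₀ (pow_ne_zero 2 (hx 1))
      have jx2 : (x + b 2)^2 * ((x + b 2)^2)⁻¹ = 1 := mul_inv_cancel₀ (pow_ne_zero 2 (hx 2))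
      have iy0 : (y + b 0) * (y + b 0)⁻¹ = 1 := mul_inv_cancel₀ (hy 0)
      have iy1 : (y + b 1) * (y + b 1)⁻¹ = 1 := mul_inv_cancel₀ (hy 1)
      have iy2 : (y + b 2) * (y + b 2)⁻¹ = 1 := mul_inv_cancel₀ (hy 2)
      set C : Matrix (Fin 3) (Fin 3) ℂ :=
        !![(x+b 1)*(x+b 2), (x+b 0)*(x+b 2), (x+b 0)*(x+b 1);
           ((x+b 1)*(x+b 2))^2, ((x+b 0)*(x+b 2))^2, ((x+b 0)*(x+b 1))^2;
           (y+b 1)*(y+b 2), (y+b 0)*(y+b 2), (y+b 0)*(y+b 1)] with hC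
      have hdet : C.det ≠ 0 := by
        rw [hC, detC_eq]
        have d01 : b 0 - b 1 ≠ 0 := sub_ne_zero.2 (fun h => (by decide : (0:Fin 3) ≠ 1) (hb h))
        have d02 : b 0 - b 2 ≠ 0 := sub_ne_zero.2 (fun h => (by decide : (0:Fin 3) ≠ 2) (hb h))
        have d12 : b 1 - b 2 ≠ 0 := sub_ne_zero.2 (fun h => (by decide : (1:Fin 3) ≠ 2) (hb h))
        have hxy' : x - y ≠ 0 := sub_ne_zero.2 hxy
        exact mul_ne_zero (mul_ne_zero (pow_ne_zero _ hxy')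
          (mul_ne_zero (mul_ne_zero d01 d02) d12))
          (mul_ne_zero (mul_ne_zero (hx 0) (hx 1)) (hx 2))
      have hCu : C.mulVec u = 0 := by
        funext k
        fin_cases k <;>
          simp only [hC, Matrix.mulVec, dotProduct, Fin.sum_univ_three, Fin.isValue,
            Fin.zero_eta, Fin.mk_one, Matrix.cons_val', Matrix.cons_val_zero, Matrix.cons_val_one,
            Matrix.head_cons, Matrix.cons_val_two, Matrix.tail_cons, Matrix.empty_val',
            Matrix.cons_val_fin_one, Matrix.head_fin_const, Matrix.of_apply, Pi.zero_apply,
            Fin.mk_zero, Fin.reduceFinMk]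
        · linear_combination ((x + b 0)*(x + b 1)*(x + b 2)) * e0
            - ((x + b 1)*(x + b 2) * u 0) * ix0
            - ((x + b 0)*(x + b 2) * u 1) * ix1
            - ((x + b 0)*(x + b 1) * u 2) * ix2
        · linear_combination ((x + b 0)^2*(x + b 1)^2*(x + b 2)^2) * e1
            - (((x + b 1)*(x + b 2))^2 * u 0) * jx0
            - (((x + b 0)*(x + b 2))^2 * u 1) * jx1
            - (((x + b 0)*(x + b 1))^2 * u 2) * jx2
        · linear_combination ((y + b 0)*(y + b 1)*(y + b 2)) * e2
            - ((y + b 1)*(y + b 2) * u 0) * iy0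
            - ((y + b 0)*(y + b 2) * u 1) * iy1
            - ((y + b 0)*(y + b 1) * u 2) * iy2
      exact Matrix.eq_zero_of_mulVec_eq_zero hdet hCu
    rw [hkerbot]
    simp
  · -- n ≥ 3
    have hn3 : 3 ≤ n := h3
    have hrank : A.rank = 4 := by
      have hT : Aᵀ.rank = 4 := by
        have hkerT : LinearMap.ker Aᵀ.mulVecLin = ⊥ := by
          rw [LinearMap.ker_eq_bot']
          intro v hv
          have hv' : Aᵀ.mulVec v = 0 := hv
          have he : Function.Injective (Fin.castLE (show 4 ≤ n + 1 by omega)) :=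
            Fin.castLE_injective _
          apply key4 x y (b ∘ Fin.castLE (show 4 ≤ n + 1 by omega)) (hb.comp he)
            (fun i => hx _) (fun i => hy _) hxy
          intro k
          have := congrFun hv' (Fin.castLE (show 4 ≤ n + 1 by omega) k)
          simpa [hA, Matrix.mulVec, dotProduct, Fin.sum_univ_four,
            Matrix.transpose_apply, Function.comp_apply] using this
        have h4 := LinearMap.finrank_range_add_finrank_ker Aᵀ.mulVecLin
        rw [hkerT] at h4
        simp only [finrank_bot, add_zero] at h4
        have : Module.finrank ℂ (LinearMap.range Aᵀ.mulVecLin) = Aᵀ.rank := rfl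
        rw [this] at h4
        rw [h4]
        simp [Module.finrank_fintype_fun_eq_card]
      rw [← Matrix.rank_transpose]
      exact hT
    rw [hrange, hdom, hrank] at hrn
    omega
end

section
/- Let A be a real hyperplane arrangement in R^d given by affine-linear forms ℓ_0, ..., ℓ_n with real coefficients, such that A is essential and has no flats at infinity, and suppose for every u in the open positive orthant R_+^{n+1} the critical set Crit_X(u) consists of exactly r = (-1)^d χ(X) reduced points. Then the logarithmic discriminant variety ∇_log(X) contains no point of the open positive orthant; i.e., ∇_log(X) ∩ R_+^{n+1} = ∅. -/
/-!
Write `ℓ(x) = A x + b`. At a critical point `x` of `∑ wᵢ log ℓᵢ` the affine function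
`z ↦ ∑ wᵢ ℓᵢ(z) / ℓᵢ(x)` is constant, equal to `∑ wᵢ`. Let `wₘ → v` with `v` positive and `xₘ`
critical for `wₘ`. If `xₘ → ∞`, take `z` on the flat of the hyperplanes whose normals vanish on
a limiting direction of `xₘ` (it exists as there are no flats at infinity): every term tends to
`0`, so `∑ vᵢ = 0`. If `xₘ → x₀` with `x₀` on some hyperplanes, take `z = x₀`: the sum of `vᵢ`
over those hyperplanes vanishes. Both are absurd, so critical points for weights near `v` stay in
a compact part of the complement. There an infinite critical set accumulates, and an accumulation
point of critical points is degenerate (secant matrices tend to the Hessian); and degenerate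
critical points for weights tending to `v` accumulate at a degenerate critical point for `v`.
-/

open Filter Topology Matrix

theorem exists_tendsto_subseq_inv_norm_smul {𝕜 E : Type*} [RCLike 𝕜] [NormedAddCommGroup E]
    [NormedSpace 𝕜 E] [ProperSpace E] {y : ℕ → E} (hy : ∀ᶠ m in atTop, y m ≠ 0) :
    ∃ e ≠ 0, ∃ φ : ℕ → ℕ, StrictMono φ ∧
      Tendsto (fun m => (‖y (φ m)‖ : 𝕜)⁻¹ • y (φ m)) atTop (𝓝 e) := by
  have hball : ∀ m, (‖y m‖ : 𝕜)⁻¹ • y m ∈ Metric.closedBall (0 : E) 1 := fun m => by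
    rcases eq_or_ne (y m) 0 with h | h
    · simp [h]
    · simp [norm_smul_inv_norm h]
  obtain ⟨e, -, φ, hφ, he⟩ := tendsto_subseq_of_bounded Metric.isBounded_closedBall hball
  have hnorm : ‖e‖ = 1 := by
    refine tendsto_nhds_unique he.norm (tendsto_const_nhds.congr' ?_)
    exact (hφ.tendsto_atTop.eventually hy).mono fun m hm => by
      simp only [Function.comp_apply, norm_smul_inv_norm hm]
  exact ⟨e, norm_ne_zero_iff.1 (by simp [hnorm]), φ, hφ, he⟩

section LogCritical

variable {α ι κ : Type*}

-- An open condition, satisfied by positive weights, that keeps critical points from escaping.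
def HasNonzeroSubsums (v : ι → ℂ) : Prop :=
  ∀ J : Finset ι, J.Nonempty → ∑ i ∈ J, v i ≠ 0

section

variable [Fintype κ] (A : Matrix ι κ ℂ) (b : ι → ℂ)

def NoFlatsAtInfinity : Prop :=
  ∀ I : Finset ι, (∃ v : κ → ℂ, v ≠ 0 ∧ ∀ i ∈ I, (A *ᵥ v) i = 0) →
    ∃ x : κ → ℂ, ∀ i ∈ I, (A *ᵥ x + b) i = 0

variable {A b}

theorem continuousAt_div_mulVec_add_pow (k : ℕ) {u : ι → ℂ} {x₀ : κ → ℂ}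
    (hx₀ : ∀ i, (A *ᵥ x₀ + b) i ≠ 0) :
    ContinuousAt (fun p : (ι → ℂ) × (κ → ℂ) => p.1 / (A *ᵥ p.2 + b) ^ k) (u, x₀) :=
  continuousAt_pi.2 fun i => by
    simp only [Pi.div_apply, Pi.pow_apply]
    fun_prop (disch := exact pow_ne_zero _ (hx₀ i))

theorem tendsto_inv_mulVec_add_apply {l : Filter α} {x : α → κ → ℂ} {e : κ → ℂ} {i : ι}
    (hx : Tendsto (fun m => ‖x m‖) l atTop)
    (he : Tendsto (fun m => (‖x m‖ : ℂ)⁻¹ • x m) l (𝓝 e)) (hi : (A *ᵥ e) i ≠ 0) :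
    Tendsto (fun m => ((A *ᵥ x m + b) i)⁻¹) l (𝓝 0) := by
  set c : α → ℂ := fun m => (‖x m‖ : ℂ)⁻¹
  have hc : Tendsto c l (𝓝 0) := by
    have h := (Complex.continuous_ofReal.tendsto 0).comp (tendsto_inv_atTop_zero.comp hx)
    simpa [c, Function.comp_def] using h
  -- `ℓ(x)⁻¹ = c * ℓ'⁻¹`, where `ℓ' = A(c x) + c b` tends to `A e`
  have hrescale : ∀ᶠ m in l, ((A *ᵥ x m + b) i)⁻¹ = c m * ((A *ᵥ (c m • x m)) i + c m * b i)⁻¹ :=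
    (hx.eventually_gt_atTop 0).mono fun m hm => by
      have hcm : c m ≠ 0 := by simpa [c] using hm.ne'
      rw [mulVec_smul, Pi.smul_apply, smul_eq_mul, ← mul_add, mul_inv, mul_inv_cancel_left₀ hcm]
      rfl
  have hAx : Tendsto (fun m => (A *ᵥ (c m • x m)) i) l (𝓝 ((A *ᵥ e) i)) :=
    (Continuous.tendsto (f := fun y => (A *ᵥ y) i) (by fun_prop) e).comp he
  have hlim := hc.mul ((hAx.add (hc.mul_const (b i))).inv₀ (by simpa using hi))
  rw [zero_mul] at hlim
  exact hlim.congr' (EventuallyEq.symm hrescale)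

end

variable [Fintype ι] [Fintype κ] (A : Matrix ι κ ℂ) (b : ι → ℂ)

noncomputable section

def logGradient (u : ι → ℂ) (x : κ → ℂ) : κ → ℂ :=
  Aᵀ *ᵥ (u / (A *ᵥ x + b))

def IsLogCrit (u : ι → ℂ) (x : κ → ℂ) : Prop :=
  (∀ i, (A *ᵥ x + b) i ≠ 0) ∧ logGradient A b u x = 0

-- Minus the Hessian of `∑ uᵢ log ℓᵢ`; only its determinant matters.
def logHessian [DecidableEq ι] (u : ι → ℂ) (x : κ → ℂ) : Matrix κ κ ℂ :=
  Aᵀ * diagonal (u / (A *ᵥ x + b) ^ 2) * A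

def logDiscriminant [DecidableEq ι] [DecidableEq κ] : Set (ι → ℂ) :=
  closure {u | {x | IsLogCrit A b u x}.Infinite ∨
    ∃ x, IsLogCrit A b u x ∧ (logHessian A b u x).det = 0}

end

variable {A b}

theorem logGradient_apply (u : ι → ℂ) (x : κ → ℂ) (j : κ) :
    logGradient A b u x j = ∑ i, u i * A i j / (A *ᵥ x + b) i := by
  simp only [logGradient, mulVec, dotProduct, transpose_apply, Pi.div_apply]
  exact Finset.sum_congr rfl fun i _ => by ring

theorem logHessian_apply [DecidableEq ι] (u : ι → ℂ) (x : κ → ℂ) (j k : κ) :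
    logHessian A b u x j k = ∑ i, u i * A i j * A i k / (A *ᵥ x + b) i ^ 2 := by
  rw [logHessian, mul_apply]
  simp only [mul_diagonal, transpose_apply, Pi.div_apply, Pi.pow_apply]
  exact Finset.sum_congr rfl fun i _ => by ring

theorem continuousAt_logGradient {u : ι → ℂ} {x₀ : κ → ℂ} (hx₀ : ∀ i, (A *ᵥ x₀ + b) i ≠ 0) :
    ContinuousAt (fun p : (ι → ℂ) × (κ → ℂ) => logGradient A b p.1 p.2) (u, x₀) := by
  have h := continuousAt_div_mulVec_add_pow (A := A) (b := b) (u := u) 1 hx₀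
  simp only [pow_one] at h
  exact (Continuous.continuousAt (f := fun q => Aᵀ *ᵥ q) (by fun_prop)).comp h

theorem continuousAt_det_logHessian [DecidableEq ι] [DecidableEq κ] {u : ι → ℂ} {x₀ : κ → ℂ}
    (hx₀ : ∀ i, (A *ᵥ x₀ + b) i ≠ 0) :
    ContinuousAt (fun p : (ι → ℂ) × (κ → ℂ) => (logHessian A b p.1 p.2).det) (u, x₀) := by
  have h : Continuous fun q : ι → ℂ => (Aᵀ * diagonal q * A).det := by fun_prop
  exact h.continuousAt.comp (continuousAt_div_mulVec_add_pow 2 hx₀)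

theorem IsLogCrit.dotProduct_eq_sum {u : ι → ℂ} {x : κ → ℂ} (h : IsLogCrit A b u x)
    (z : κ → ℂ) : (u / (A *ᵥ x + b)) ⬝ᵥ (A *ᵥ z + b) = ∑ i, u i := by
  have hz : ∀ z, (u / (A *ᵥ x + b)) ⬝ᵥ (A *ᵥ z + b) = (u / (A *ᵥ x + b)) ⬝ᵥ b := fun z => by
    rw [dotProduct_add, dotProduct_mulVec, ← mulVec_transpose, ← logGradient, h.2,
      zero_dotProduct, zero_add]
  rw [hz z, ← hz x]
  exact Finset.sum_congr rfl fun i _ => div_mul_cancel₀ (u i) (h.1 i)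

theorem mulVec_sub_eq_logGradient_sub [DecidableEq ι] {u : ι → ℂ} {x y : κ → ℂ}
    (hx : ∀ i, (A *ᵥ x + b) i ≠ 0) (hy : ∀ i, (A *ᵥ y + b) i ≠ 0) :
    (Aᵀ * diagonal (u / ((A *ᵥ y + b) * (A *ᵥ x + b))) * A) *ᵥ (y - x) =
      logGradient A b u x - logGradient A b u y := by
  rw [← mulVec_mulVec, ← mulVec_mulVec, logGradient, logGradient, ← mulVec_sub]
  congr 1
  funext i
  have hℓ : (A *ᵥ (y - x)) i = (A *ᵥ y + b) i - (A *ᵥ x + b) i := by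
    simp [mulVec_sub]
  rw [mulVec_diagonal, hℓ]
  simp only [Pi.div_apply, Pi.mul_apply, Pi.sub_apply]
  rw [div_sub_div _ _ (hx i) (hy i)]
  ring

theorem IsLogCrit.of_tendsto {w : ℕ → ι → ℂ} {v : ι → ℂ} {x : ℕ → κ → ℂ} {x₀ : κ → ℂ}
    (hw : Tendsto w atTop (𝓝 v)) (hx : Tendsto x atTop (𝓝 x₀))
    (hcrit : ∀ m, IsLogCrit A b (w m) (x m)) (hx₀ : ∀ i, (A *ᵥ x₀ + b) i ≠ 0) :
    IsLogCrit A b v x₀ :=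
  ⟨hx₀, tendsto_nhds_unique ((continuousAt_logGradient hx₀).tendsto.comp (hw.prodMk_nhds hx))
    (tendsto_const_nhds.congr fun m => ((hcrit m).2).symm)⟩

theorem det_logHessian_eq_zero_of_tendsto [DecidableEq ι] [DecidableEq κ] {u : ι → ℂ}
    {p : ℕ → κ → ℂ} {x₀ : κ → ℂ} (hp : ∀ m, IsLogCrit A b u (p m)) (hx₀ : IsLogCrit A b u x₀)
    (hlim : Tendsto p atTop (𝓝 x₀)) (hne : ∀ᶠ m in atTop, p m ≠ x₀) :
    (logHessian A b u x₀).det = 0 := by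
  -- secant matrices: `S y *ᵥ (y - x₀)` is a difference of gradients, and `S x₀` is the Hessian
  set S : (κ → ℂ) → Matrix κ κ ℂ := fun y =>
    Aᵀ * diagonal (u / ((A *ᵥ y + b) * (A *ᵥ x₀ + b))) * A
  obtain ⟨e, he, φ, hφ, he_lim⟩ := exists_tendsto_subseq_inv_norm_smul (𝕜 := ℂ)
    (hne.mono fun m hm => sub_ne_zero.2 hm)
  have hSe : ∀ m, S (p m) *ᵥ ((‖p m - x₀‖ : ℂ)⁻¹ • (p m - x₀)) = 0 := fun m => by
    rw [mulVec_smul, mulVec_sub_eq_logGradient_sub hx₀.1 (hp m).1, hx₀.2, (hp m).2, sub_zero,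
      smul_zero]
  have hS : ContinuousAt S x₀ := by
    have hq : ContinuousAt (fun y => u / ((A *ᵥ y + b) * (A *ᵥ x₀ + b))) x₀ :=
      continuousAt_pi.2 fun i => by
        simp only [Pi.div_apply, Pi.mul_apply]
        fun_prop (disch := exact mul_ne_zero (hx₀.1 i) (hx₀.1 i))
    exact (Continuous.continuousAt (f := fun q => Aᵀ * diagonal q * A) (by fun_prop)).comp hq
  have hSx₀ : S x₀ = logHessian A b u x₀ := by simp only [S, logHessian, sq]
  have hker : logHessian A b u x₀ *ᵥ e = 0 := by
    rw [← hSx₀]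
    have hlim' := ((continuous_fst.matrix_mulVec continuous_snd).tendsto (S x₀, e)).comp
      ((hS.tendsto.comp (hlim.comp hφ.tendsto_atTop)).prodMk_nhds he_lim)
    exact tendsto_nhds_unique hlim' (tendsto_const_nhds.congr fun m => (hSe (φ m)).symm)
  exact exists_mulVec_eq_zero_iff.1 ⟨e, he, hker⟩

theorem not_tendsto_norm_atTop_of_isLogCrit (hA : NoFlatsAtInfinity A b) {w : ℕ → ι → ℂ}
    {v : ι → ℂ} (hw : Tendsto w atTop (𝓝 v)) (hv : ∑ i, v i ≠ 0) {x : ℕ → κ → ℂ}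
    (hx : ∀ m, IsLogCrit A b (w m) (x m)) : ¬Tendsto (fun m => ‖x m‖) atTop atTop := by
  classical
  intro hx_top
  obtain ⟨e, he, φ, hφ, he_lim⟩ := exists_tendsto_subseq_inv_norm_smul (𝕜 := ℂ)
    ((hx_top.eventually_gt_atTop 0).mono fun m hm => norm_pos_iff.1 hm)
  obtain ⟨z, hz⟩ := hA (Finset.univ.filter fun i => (A *ᵥ e) i = 0)
    ⟨e, he, fun i hi => (Finset.mem_filter.1 hi).2⟩
  have hw' := hw.comp hφ.tendsto_atTop
  have hterm : ∀ i, Tendsto (fun m => (w (φ m) / (A *ᵥ x (φ m) + b)) i * (A *ᵥ z + b) i)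
      atTop (𝓝 0) := fun i => by
    by_cases hi : (A *ᵥ e) i = 0
    · simp [hz i (by simpa using hi)]
    · have h := ((tendsto_pi_nhds.1 hw' i).mul (tendsto_inv_mulVec_add_apply (b := b)
        (hx_top.comp hφ.tendsto_atTop) he_lim hi)).mul_const ((A *ᵥ z + b) i)
      simpa [div_eq_mul_inv] using h
  have hsum : Tendsto (fun m => ∑ i, w (φ m) i) atTop (𝓝 0) := by
    simpa using (tendsto_finsetSum Finset.univ fun i _ => hterm i).congr
      fun m => (hx (φ m)).dotProduct_eq_sum z
  exact hv (tendsto_nhds_unique (tendsto_finsetSum _ fun i _ => tendsto_pi_nhds.1 hw' i) hsum)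

theorem apply_ne_zero_of_isLogCrit_tendsto {w : ℕ → ι → ℂ} {v : ι → ℂ}
    (hw : Tendsto w atTop (𝓝 v)) (hv : HasNonzeroSubsums v) {x : ℕ → κ → ℂ} {x₀ : κ → ℂ}
    (hx : ∀ m, IsLogCrit A b (w m) (x m)) (hx₀ : Tendsto x atTop (𝓝 x₀)) (i : ι) :
    (A *ᵥ x₀ + b) i ≠ 0 := by
  classical
  set J := Finset.univ.filter fun i => (A *ᵥ x₀ + b) i = 0
  have hterm : ∀ i, Tendsto (fun m => (w m / (A *ᵥ x m + b)) i * (A *ᵥ x₀ + b) i) atTop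
      (𝓝 (v i - if (A *ᵥ x₀ + b) i = 0 then v i else 0)) := fun i => by
    split_ifs with hi
    · simp [hi]
    · have hℓ : Tendsto (fun m => (A *ᵥ x m + b) i) atTop (𝓝 ((A *ᵥ x₀ + b) i)) :=
        (Continuous.tendsto (f := fun y => (A *ᵥ y + b) i) (by fun_prop) x₀).comp hx₀
      rw [sub_zero, ← div_mul_cancel₀ (v i) hi]
      exact ((tendsto_pi_nhds.1 hw i).div hℓ hi).mul_const _
  have hsum := tendsto_nhds_unique
    ((tendsto_finsetSum Finset.univ fun i _ => hterm i).congr fun m => (hx m).dotProduct_eq_sum x₀)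
    (tendsto_finsetSum _ fun i _ => tendsto_pi_nhds.1 hw i)
  rw [Finset.sum_sub_distrib, ← Finset.sum_filter, sub_eq_self] at hsum
  exact fun h => hv J ⟨i, by simpa [J] using h⟩ hsum

theorem exists_isLogCrit_subseq_tendsto [Nonempty ι] (hA : NoFlatsAtInfinity A b)
    {w : ℕ → ι → ℂ} {v : ι → ℂ} (hw : Tendsto w atTop (𝓝 v)) (hv : HasNonzeroSubsums v)
    {x : ℕ → κ → ℂ} (hx : ∀ m, IsLogCrit A b (w m) (x m)) :
    ∃ x₀, IsLogCrit A b v x₀ ∧ ∃ φ : ℕ → ℕ, StrictMono φ ∧ Tendsto (x ∘ φ) atTop (𝓝 x₀) := by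
  have hbdd : ∃ R, ∃ᶠ m in atTop, x m ∈ Metric.closedBall 0 R := by
    have h := not_tendsto_norm_atTop_of_isLogCrit hA hw (hv _ Finset.univ_nonempty) hx
    simp only [tendsto_atTop, not_forall, not_eventually, not_le] at h
    obtain ⟨R, hR⟩ := h
    exact ⟨R, hR.mono fun m hm => by simpa using hm.le⟩
  obtain ⟨R, hR⟩ := hbdd
  obtain ⟨x₀, -, φ, hφ, hlim⟩ := tendsto_subseq_of_frequently_bounded Metric.isBounded_closedBall hR
  have hw' := hw.comp hφ.tendsto_atTop
  have hx' : ∀ m, IsLogCrit A b ((w ∘ φ) m) ((x ∘ φ) m) := fun m => hx (φ m)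
  exact ⟨x₀, .of_tendsto hw' hlim hx' (apply_ne_zero_of_isLogCrit_tendsto hw' hv hx' hlim),
    φ, hφ, hlim⟩

theorem exists_det_logHessian_eq_zero_of_infinite [Nonempty ι] [DecidableEq ι] [DecidableEq κ]
    (hA : NoFlatsAtInfinity A b) {v : ι → ℂ} (hv : HasNonzeroSubsums v)
    (hinf : {x | IsLogCrit A b v x}.Infinite) :
    ∃ x, IsLogCrit A b v x ∧ (logHessian A b v x).det = 0 := by
  set y : ℕ → κ → ℂ := fun m => hinf.natEmbedding _ m
  have hy : ∀ m, IsLogCrit A b v (y m) := fun m => (hinf.natEmbedding _ m).2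
  have hinj : Function.Injective y :=
    Subtype.val_injective.comp (hinf.natEmbedding _).injective
  obtain ⟨x₀, hx₀, φ, hφ, hlim⟩ := exists_isLogCrit_subseq_tendsto hA tendsto_const_nhds hv hy
  have hne : ∀ᶠ m in atTop, y (φ m) ≠ x₀ := by
    rw [← Nat.cofinite_eq_atTop]
    exact (hinj.comp hφ.injective).tendsto_cofinite.eventually (eventually_cofinite_ne x₀)
  exact ⟨x₀, hx₀, det_logHessian_eq_zero_of_tendsto (fun m => hy _) hx₀ hlim hne⟩

theorem eventually_hasNonzeroSubsums {u : ι → ℝ} (hu : ∀ i, 0 < u i) :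
    ∀ᶠ v in 𝓝 (fun i => (u i : ℂ)), HasNonzeroSubsums v := by
  refine eventually_all.2 fun J => ?_
  rcases J.eq_empty_or_nonempty with rfl | hJ
  · simp
  · have hpos : ∑ i ∈ J, (u i : ℂ) ≠ 0 := by
      exact_mod_cast (Finset.sum_pos (fun i _ => hu i) hJ).ne'
    exact ((continuous_finsetSum J fun i _ => continuous_apply i).continuousAt.eventually_ne
      hpos).mono fun v hv _ => hv

theorem ofReal_notMem_logDiscriminant [Nonempty ι] [DecidableEq ι] [DecidableEq κ]
    (hA : NoFlatsAtInfinity A b) {u : ι → ℝ} (hu : ∀ i, 0 < u i)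
    (hnd : ∀ x, IsLogCrit A b (fun i => (u i : ℂ)) x →
      (logHessian A b (fun i => (u i : ℂ)) x).det ≠ 0) :
    (fun i => (u i : ℂ)) ∉ logDiscriminant A b := by
  intro hmem
  have hfreq : ∃ᶠ v in 𝓝 (fun i => (u i : ℂ)),
      ∃ x, IsLogCrit A b v x ∧ (logHessian A b v x).det = 0 :=
    ((mem_closure_iff_frequently.1 hmem).and_eventually (eventually_hasNonzeroSubsums hu)).mono
      fun v ⟨hdisc, hv⟩ => hdisc.elim (exists_det_logHessian_eq_zero_of_infinite hA hv) id
  obtain ⟨w, hw, hdeg⟩ := frequently_iff_seq_forall.1 hfreq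
  choose x hx hdet using hdeg
  obtain ⟨x₀, hx₀, φ, hφ, hlim⟩ :=
    exists_isLogCrit_subseq_tendsto hA hw (eventually_hasNonzeroSubsums hu).self_of_nhds hx
  have hlim' := (continuousAt_det_logHessian hx₀.1).tendsto.comp
    ((hw.comp hφ.tendsto_atTop).prodMk_nhds hlim)
  exact hnd x₀ hx₀ (tendsto_nhds_unique hlim' (tendsto_const_nhds.congr fun m => (hdet _).symm))

end LogCritical

theorem stmt_12_general (d n r : ℕ)
    (A : Matrix (Fin (n+1)) (Fin d) ℝ) (b : Fin (n+1) → ℝ)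
    (ℓ : (Fin d → ℂ) → Fin (n+1) → ℂ)
    (hℓ : ∀ x i, ℓ x i = (∑ j, (A i j : ℂ) * x j) + (b i : ℂ))
    (X : Set (Fin d → ℂ))
    (hX : X = {x | ∀ i, ℓ x i ≠ 0})
    (Crit : (Fin (n+1) → ℂ) → Set (Fin d → ℂ))
    (hCrit : ∀ u, Crit u = {x ∈ X | ∀ j, ∑ i, u i * (A i j : ℂ) / ℓ x i = 0})
    (Hess : (Fin (n+1) → ℂ) → (Fin d → ℂ) → ℂ)
    (hHess : ∀ u x, Hess u x =
      (Matrix.of fun j k : Fin d => ∑ i, u i * (A i j : ℂ) * (A i k : ℂ) / (ℓ x i)^2).det)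
    -- no flats at infinity
    (hflats : ∀ I : Finset (Fin (n+1)),
      (∃ v : Fin d → ℂ, v ≠ 0 ∧ ∀ i ∈ I, ∑ j, (A i j : ℂ) * v j = 0) →
      ∃ x : Fin d → ℂ, ∀ i ∈ I, ℓ x i = 0)
    -- for every positive real `u`, the critical set consists of `r` reduced points
    (hVarchenko : ∀ u : Fin (n+1) → ℝ, (∀ i, 0 < u i) →
      (Crit fun i => (u i : ℂ)).Finite ∧ (Crit fun i => (u i : ℂ)).ncard = r ∧
        ∀ x ∈ Crit fun i => (u i : ℂ), Hess (fun i => (u i : ℂ)) x ≠ 0) :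
    ∀ u : Fin (n+1) → ℝ, (∀ i, 0 < u i) →
      (fun i => (u i : ℂ)) ∉
        closure {u' : Fin (n+1) → ℂ |
          (Crit u').Infinite ∨ ∃ x ∈ Crit u', Hess u' x = 0} := by
  intro u hu
  set A' : Matrix (Fin (n+1)) (Fin d) ℂ := A.map (↑)
  set b' : Fin (n+1) → ℂ := fun i => (b i : ℂ)
  obtain rfl : ℓ = fun x => A' *ᵥ x + b' := funext fun x => funext fun i => hℓ x i
  have hCrit' : Crit = fun v => {x | IsLogCrit A' b' v x} := by
    funext v
    ext x
    rw [hCrit, hX]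
    simp only [Set.mem_ofPred_eq, IsLogCrit, funext_iff, logGradient_apply, Pi.zero_apply]
    rfl
  have hHess' : Hess = fun v x => (logHessian A' b' v x).det := by
    funext v x
    rw [hHess]
    congr 1
    ext j k
    rw [logHessian_apply]
    rfl
  subst hCrit' hHess'
  exact ofReal_notMem_logDiscriminant hflats hu (hVarchenko u hu).2.2

/-- Corollary 4.2: for a real essential arrangement with no flats at infinity such
that for every positive `u` the critical set consists of exactly `r = (-1)^d χ(X)`
reduced (nondegenerate) points, the logarithmic discriminant (the closure of the set
of `u` with infinite or non-reduced critical locus) contains no point of the open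
positive orthant. -/
theorem stmt_12 (d n r : ℕ)
    (A : Matrix (Fin (n+1)) (Fin d) ℝ) (b : Fin (n+1) → ℝ)
    (ℓ : (Fin d → ℂ) → Fin (n+1) → ℂ)
    (hℓ : ∀ x i, ℓ x i = (∑ j, (A i j : ℂ) * x j) + (b i : ℂ))
    (X : Set (Fin d → ℂ))
    (hX : X = {x | ∀ i, ℓ x i ≠ 0})
    (Crit : (Fin (n+1) → ℂ) → Set (Fin d → ℂ))
    (hCrit : ∀ u, Crit u = {x ∈ X | ∀ j, ∑ i, u i * (A i j : ℂ) / ℓ x i = 0})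
    (Hess : (Fin (n+1) → ℂ) → (Fin d → ℂ) → ℂ)
    (hHess : ∀ u x, Hess u x =
      (Matrix.of fun j k : Fin d => ∑ i, u i * (A i j : ℂ) * (A i k : ℂ) / (ℓ x i)^2).det)
    -- essentiality: the matrix `[b | A]` has full rank `d+1`
    (hessential : (Matrix.of fun (i : Fin (n+1)) (j : Fin (d+1)) =>
      Fin.cons (b i) (fun k => A i k) j).rank = d + 1)
    -- no flats at infinity
    (hflats : ∀ I : Finset (Fin (n+1)),
      (∃ v : Fin d → ℂ, v ≠ 0 ∧ ∀ i ∈ I, ∑ j, (A i j : ℂ) * v j = 0) →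
      ∃ x : Fin d → ℂ, ∀ i ∈ I, ℓ x i = 0)
    -- for every positive real `u`, the critical set consists of `r` reduced points
    (hVarchenko : ∀ u : Fin (n+1) → ℝ, (∀ i, 0 < u i) →
      (Crit fun i => (u i : ℂ)).Finite ∧ (Crit fun i => (u i : ℂ)).ncard = r ∧
        ∀ x ∈ Crit fun i => (u i : ℂ), Hess (fun i => (u i : ℂ)) x ≠ 0) :
    ∀ u : Fin (n+1) → ℝ, (∀ i, 0 < u i) →
      (fun i => (u i : ℂ)) ∉
        closure {u' : Fin (n+1) → ℂ |
          (Crit u').Infinite ∨ ∃ x ∈ Crit u', Hess u' x = 0} :=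
  stmt_12_general d n r A b ℓ hℓ X hX Crit hCrit Hess hHess hflats hVarchenko
end

section
/- For u = (s13, s14, s23, s24, s34) ∈ C^5, define a(u), b(u), c(u) as the coefficients obtained as follows: solve the first scattering equation s13/x1 + s23/(x1-1) - s34/(x2-x1) = 0 for x2 as a rational function f(x1), substitute into the second equation s14/x2 + s24/(x2-1) + s34/(x2-x1) = 0, and clear denominators; the numerator factors as (s13(x1-1) + s23 x1)(c(u) + b(u) x1 + a(u) x1^2) where a, b, c are homogeneous of degree 2 in u. Then the quadratic discriminant b(u)^2 - 4 a(u) c(u) equals (s13 s24 + s13 s34 + s14 s34 + s14 s23 + s23 s34 + s24 s34 + s34^2)^2 - 4 s13 s14 s23 s24. -/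
/-- Elimination for the `M_{0,5}` scattering equations: substituting the solution of
the first scattering equation into the second and clearing denominators, the numerator
factors as `(s13(x1-1) + s23 x1)·(c + b x1 + a x1²)` (up to the spurious factor
`s34 x1 (x1-1)` coming from clearing denominators), where `a, b, c` are quadratic in
the Mandelstam variables, and the quadratic discriminant `b² - 4ac` equals the
logarithmic discriminant of `M_{0,5}`. -/
theorem stmt_14 (s13 s14 s23 s24 s34 : ℂ) :
    ∃ a b c : ℂ,
      (∀ x1 x2 : ℂ, x1 ≠ 0 → x1 ≠ 1 → x2 ≠ 0 → x2 ≠ 1 → x2 ≠ x1 →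
        s13 * (x1 - 1) + s23 * x1 ≠ 0 →
        s13 / x1 + s23 / (x1 - 1) - s34 / (x2 - x1) = 0 →
        (s14 / x2 + s24 / (x2 - 1) + s34 / (x2 - x1))
            * (x2 * (x2 - 1) * (x2 - x1)) * (s13 * (x1 - 1) + s23 * x1) ^ 3 =
          s34 * x1 * (x1 - 1) *
            ((s13 * (x1 - 1) + s23 * x1) * (c + b * x1 + a * x1 ^ 2))) ∧
      b ^ 2 - 4 * a * c =
        (s13*s24 + s13*s34 + s14*s34 + s14*s23 + s23*s34 + s24*s34 + s34^2)^2
          - 4*s13*s14*s23*s24 := by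
  refine ⟨s13^2 + 2*s13*s23 + s23^2 + 2*s13*s34 + 2*s23*s34 + s34^2 + s13*s14 + s14*s23
      + s13*s24 + s23*s24 + s14*s34 + s24*s34,
    -(2*s13^2 + 2*s13*s23 + 2*s13*s14 + s14*s23 + s13*s24 + 3*s13*s34 + s14*s34 + s23*s34
      + s24*s34 + s34^2),
    s13*(s13 + s14 + s34), ?_, by ring⟩
  intro x1 x2 hx10 hx11 hx20 hx21 hx2x1 hD heq
  have h2 : x1 - 1 ≠ 0 := sub_ne_zero.mpr hx11
  have h4 : x2 - 1 ≠ 0 := sub_ne_zero.mpr hx21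
  have h5 : x2 - x1 ≠ 0 := sub_ne_zero.mpr hx2x1
  have hx2 : x2 * (s13*(x1-1) + s23*x1) = x1 * (s13*(x1-1) + s23*x1) + s34*x1*(x1-1) := by
    field_simp at heq
    linear_combination heq
  have key : (s14 / x2 + s24 / (x2 - 1) + s34 / (x2 - x1))
      * (x2 * (x2 - 1) * (x2 - x1)) * (s13 * (x1 - 1) + s23 * x1) ^ 3
      = (s14*(x2-1)*(x2-x1) + s24*x2*(x2-x1) + s34*x2*(x2-1)) * (s13*(x1-1)+s23*x1)^3 := by
    field_simp
  rw [key]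
  linear_combination (-s23*s34^2*x1^2 + s23*s34^2*x1^3 - s23*s24*s34*x1^2 + s23*s24*s34*x1^3 - s23^2*s34*x1^2 + s23^2*s34*x1^2*x2 + s23^2*s34*x1^3 + s23^2*s24*x1^2*x2 - s14*s23*s34*x1^2 + s14*s23*s34*x1^3 - s14*s23^2*x1^2 + s14*s23^2*x1^2*x2 + s13*s34^2*x1 - 2*s13*s34^2*x1^2 + s13*s34^2*x1^3 + s13*s24*s34*x1 - 2*s13*s24*s34*x1^2 + s13*s24*s34*x1^3 + 2*s13*s23*s34*x1 - 2*s13*s23*s34*x1*x2 - 4*s13*s23*s34*x1^2 + 2*s13*s23*s34*x1^2*x2 + 2*s13*s23*s34*x1^3 - 2*s13*s23*s24*x1*x2 + 2*s13*s23*s24*x1^2*x2 + s13*s14*s34*x1 - 2*s13*s14*s34*x1^2 + s13*s14*s34*x1^3 + 2*s13*s14*s23*x1 - 2*s13*s14*s23*x1*x2 - 2*s13*s14*s23*x1^2 + 2*s13*s14*s23*x1^2*x2 - s13^2*s34 + s13^2*s34*x2 + 3*s13^2*s34*x1 - 2*s13^2*s34*x1*x2 - 3*s13^2*s34*x1^2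 + s13^2*s34*x1^2*x2 + s13^2*s34*x1^3 + s13^2*s24*x2 - 2*s13^2*s24*x1*x2 + s13^2*s24*x1^2*x2 - s13^2*s14 + s13^2*s14*x2 + 2*s13^2*s14*x1 - 2*s13^2*s14*x1*x2 - s13^2*s14*x1^2 + s13^2*s14*x1^2*x2) * hx2
end

section
/- Let n ≥ 1 and let b_0, ..., b_n be distinct complex numbers. Define g1^h(u; x0, x1) = Σ_{i=0}^n u_i Π_{k≠i}(x1 + b_k x0), a polynomial bihomogeneous of degree 1 in u and degree n in (x0, x1), and g2^h(u; x0, x1) = Σ_{i=0}^n u_i Π_{k≠i}(x1 + b_k x0)^2, bihomogeneous of degree 1 in u and degree 2n in (x0, x1). The resultant Res_x(g1^h, g2^h) (eliminating the projective variable x = (x0:x1)) is divisible by u_0 · u_1 · ... · u_n · (u_0 + u_1 + ... + u_n) in C[u_0, ..., u_n]. -/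
open Polynomial

/-!
The Sylvester determinant is the resultant `Res(g, f)`, and `Res(g, f) = g p + f q` for some
polynomials `p, q`. Modulo `uᵢ` the `i`-th term of `f` and of `g` disappears while every other
term contains the factor `x + bᵢ`, so `f` and `g` acquire the common root `-bᵢ` and the resultant
vanishes modulo `uᵢ`. Modulo `u₀ + ⋯ + uₙ` the leading coefficients of `f` and `g` vanish, so
both degrees drop and the resultant vanishes again. The `uᵢ` and their sum are pairwise
non-associated primes (the sum is monic of degree one in `u₀` over the other variables), hence
their product divides the resultant.
-/

/-- The Sylvester matrix of two polynomials `f` (of degree ≤ m) and `g` (of degree ≤ k):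
a `(m+k) × (m+k)` matrix whose first `k` rows are shifted coefficient sequences of `f`
and whose last `m` rows are shifted coefficient sequences of `g`.  Its determinant is
the resultant `Res(f,g)` (with respect to the degrees `m, k`). -/
def sylvester {R : Type*} [CommRing R] (f g : Polynomial R) (m k : ℕ) :
    Matrix (Fin (m + k)) (Fin (m + k)) R :=
  Matrix.of fun i j =>
    if (i : ℕ) < k then
      (if (i : ℕ) ≤ (j : ℕ) then f.coeff ((j : ℕ) - (i : ℕ)) else 0)
    else
      (if (i : ℕ) - k ≤ (j : ℕ) then g.coeff ((j : ℕ) - ((i : ℕ) - k)) else 0)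

theorem sylvester_eq_reindex_transpose {R : Type*} [CommRing R] {f g : R[X]} {m k : ℕ}
    (hf : f.natDegree ≤ m) (hg : g.natDegree ≤ k) :
    _root_.sylvester f g m k = (Polynomial.sylvester g f k m).transpose.reindex
      (finCongr (add_comm k m)) (finCongr (add_comm k m)) := by
  ext i j
  obtain ⟨i, rfl⟩ := (finCongr (add_comm k m)).surjective i
  simp only [_root_.sylvester, Polynomial.sylvester, Matrix.reindex_apply, finCongr_symm,
    Matrix.submatrix_apply, Matrix.transpose_apply, Matrix.of_apply, finCongr_apply, Fin.cast_cast,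
    Fin.cast_eq_self, Fin.val_cast, Set.mem_Icc]
  induction i using Fin.addCases with
  | left i =>
    simp only [Fin.addCases_left, Fin.val_castAdd, i.isLt, if_true]
    split_ifs <;> first | rfl | omega | exact coeff_eq_zero_of_natDegree_lt (p := f) (by omega)
  | right i =>
    simp only [Fin.addCases_right, Fin.val_natAdd, Nat.add_sub_cancel_left,
      Nat.not_lt.2 (Nat.le_add_right k i), if_false]
    split_ifs <;> first | rfl | omega | exact coeff_eq_zero_of_natDegree_lt (p := g) (by omega)

theorem det_sylvester_eq_resultant {R : Type*} [CommRing R] {f g : R[X]} {m k : ℕ}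
    (hf : f.natDegree ≤ m) (hg : g.natDegree ≤ k) :
    (_root_.sylvester f g m k).det = resultant g f k m := by
  rw [sylvester_eq_reindex_transpose hf hg, Matrix.det_reindex_self, Matrix.det_transpose,
    resultant]

namespace Polynomial

variable {R : Type*} [CommRing R] {f g : R[X]} {m n : ℕ}

theorem resultant_eq_zero_of_isRoot (hf : f.natDegree ≤ m) (hg : g.natDegree ≤ n)
    (hmn : m ≠ 0 ∨ n ≠ 0) {r : R} (hfr : f.IsRoot r) (hgr : g.IsRoot r) :
    resultant f g m n = 0 := by
  obtain ⟨p, q, -, -, h⟩ := exists_mul_add_mul_eq_C_resultant f g hf hg hmn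
  simpa [hfr.eq_zero, hgr.eq_zero] using (congrArg (eval r) h).symm

theorem dvd_resultant_iff (p : R) :
    p ∣ resultant f g m n ↔
      resultant (f.map (Ideal.Quotient.mk (Ideal.span {p})))
        (g.map (Ideal.Quotient.mk (Ideal.span {p}))) m n = 0 := by
  rw [resultant_map_map, Ideal.Quotient.eq_zero_iff_dvd]

theorem dvd_resultant_of_isRoot (hf : f.natDegree ≤ m) (hg : g.natDegree ≤ n)
    (hmn : m ≠ 0 ∨ n ≠ 0) {p : R} {r : R ⧸ Ideal.span {p}}
    (hfr : (f.map (Ideal.Quotient.mk _)).IsRoot r) (hgr : (g.map (Ideal.Quotient.mk _)).IsRoot r) :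
    p ∣ resultant f g m n :=
  (dvd_resultant_iff p).2 <| resultant_eq_zero_of_isRoot (natDegree_map_le.trans hf)
    (natDegree_map_le.trans hg) hmn hfr hgr

theorem dvd_resultant_of_dvd_coeff (hf : f.natDegree ≤ m) (hg : g.natDegree ≤ n)
    (hm : m ≠ 0) (hn : n ≠ 0) {p : R} (hfm : p ∣ f.coeff m) (hgn : p ∣ g.coeff n) :
    p ∣ resultant f g m n := by
  have natDegree_map_lt {h : R[X]} {d : ℕ} (hd : d ≠ 0) (hh : h.natDegree ≤ d)
      (hpd : p ∣ h.coeff d) : (h.map (Ideal.Quotient.mk (Ideal.span {p}))).natDegree < d := by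
    have := natDegree_le_pred (p := h.map (Ideal.Quotient.mk (Ideal.span {p})))
      (natDegree_map_le.trans hh) (by rwa [coeff_map, Ideal.Quotient.eq_zero_iff_dvd])
    omega
  exact (dvd_resultant_iff p).2 <|
    resultant_eq_zero_of_lt_lt _ _ _ _ (natDegree_map_lt hm hf hfm) (natDegree_map_lt hn hg hgn)

section cofactorSum

variable {ι : Type*} [Fintype ι] [DecidableEq ι]

noncomputable def cofactorSum (u c : ι → R) (e : ℕ) : R[X] :=
  ∑ i, C (u i) * ∏ k ∈ Finset.univ.erase i, (X + C (c k)) ^ e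

theorem map_cofactorSum {S : Type*} [CommRing S] (φ : R →+* S) (u c : ι → R) (e : ℕ) :
    (cofactorSum u c e).map φ = cofactorSum (φ ∘ u) (φ ∘ c) e := by
  simp [cofactorSum, Polynomial.map_sum, Polynomial.map_prod]

theorem monic_prod_erase_X_add_C_pow (c : ι → R) (e : ℕ) (i : ι) :
    (∏ k ∈ Finset.univ.erase i, (X + C (c k)) ^ e).Monic :=
  monic_prod_of_monic _ _ fun k _ => (monic_X_add_C (c k)).pow e

theorem natDegree_prod_erase_X_add_C_pow [Nontrivial R] (c : ι → R) (e : ℕ) (i : ι) :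
    (∏ k ∈ Finset.univ.erase i, (X + C (c k)) ^ e).natDegree = (Fintype.card ι - 1) * e := by
  rw [natDegree_prod_of_monic _ _ fun k _ => (monic_X_add_C (c k)).pow e]
  simp [Finset.card_erase_of_mem]

theorem natDegree_cofactorSum_le [Nontrivial R] (u c : ι → R) (e : ℕ) :
    (cofactorSum u c e).natDegree ≤ (Fintype.card ι - 1) * e :=
  natDegree_sum_le_of_forall_le _ _ fun i _ =>
    (natDegree_C_mul_le _ _).trans (natDegree_prod_erase_X_add_C_pow c e i).le

theorem coeff_cofactorSum [Nontrivial R] (u c : ι → R) (e : ℕ) :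
    (cofactorSum u c e).coeff ((Fintype.card ι - 1) * e) = ∑ i, u i := by
  simp only [cofactorSum, finsetSum_coeff, coeff_C_mul]
  refine Finset.sum_congr rfl fun i _ => ?_
  rw [← natDegree_prod_erase_X_add_C_pow c e i,
    (monic_prod_erase_X_add_C_pow c e i).coeff_natDegree, mul_one]

theorem isRoot_cofactorSum {u : ι → R} (c : ι → R) {e : ℕ} (he : e ≠ 0) {i : ι} (hu : u i = 0) :
    (cofactorSum u c e).IsRoot (-c i) := by
  rw [IsRoot.def, cofactorSum, eval_finsetSum]
  refine Finset.sum_eq_zero fun j _ => ?_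
  obtain rfl | hji := eq_or_ne j i
  · simp [hu]
  · rw [eval_mul, eval_prod, Finset.prod_eq_zero (Finset.mem_erase.2 ⟨hji.symm, Finset.mem_univ i⟩)
      (by simp [he]), mul_zero]

end cofactorSum

end Polynomial

theorem Finset.prod_dvd_of_prime_of_not_associated {α ι : Type*} [CommMonoidWithZero α]
    [IsCancelMulZero α] (s : Finset ι) {p : ι → α} (hp : ∀ i ∈ s, Prime (p i))
    (hne : (s : Set ι).Pairwise fun i j => ¬Associated (p i) (p j)) {a : α}
    (hdvd : ∀ i ∈ s, p i ∣ a) : ∏ i ∈ s, p i ∣ a := by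
  classical
  induction s using Finset.induction_on generalizing a with
  | empty => simp
  | insert i s hi ih =>
    obtain ⟨c, rfl⟩ := hdvd i (Finset.mem_insert_self i s)
    rw [Finset.prod_insert hi]
    refine mul_dvd_mul_left _ (ih (fun j hj => hp j (Finset.mem_insert_of_mem hj))
      (hne.mono (by simp)) fun j hj => ?_)
    have hpj := hp j (Finset.mem_insert_of_mem hj)
    refine ((hpj.dvd_or_dvd (hdvd j (Finset.mem_insert_of_mem hj))).resolve_left fun hji => ?_)
    exact hne (by simp [hj]) (by simp) (ne_of_mem_of_not_mem hj hi)
      (hpj.associated_of_dvd (hp i (Finset.mem_insert_self i s)) hji)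

namespace MvPolynomial

variable {R : Type*} [CommRing R]

theorem prime_sum_X [IsDomain R] (n : ℕ) :
    Prime (∑ i : Fin (n + 1), X i : MvPolynomial (Fin (n + 1)) R) := by
  have h : finSuccEquiv R n (∑ i, X i) = Polynomial.X - Polynomial.C (-∑ i : Fin n, X i) := by
    simp [Fin.sum_univ_succ, finSuccEquiv_X_zero, finSuccEquiv_X_succ, map_sum]
  rw [← MulEquiv.prime_iff (finSuccEquiv R n), h]
  exact Polynomial.prime_X_sub_C _

theorem X_not_dvd_sum_X [Nontrivial R] {σ : Type*} [Fintype σ] [Nontrivial σ] (i : σ) :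
    ¬(X i : MvPolynomial σ R) ∣ ∑ j, X j := by
  classical
  obtain ⟨j, hj⟩ := exists_ne i
  intro h
  simpa [Pi.single_apply, hj.symm] using map_dvd (eval (Pi.single j (1 : R))) h

theorem prod_X_mul_sum_X_dvd [IsDomain R] {n : ℕ} (hn : n ≠ 0) {a : MvPolynomial (Fin (n + 1)) R}
    (hX : ∀ i, X i ∣ a) (hsum : ∑ i, X i ∣ a) : (∏ i, X i) * ∑ i, X i ∣ a := by
  have : Nontrivial (Fin (n + 1)) := Fin.nontrivial_iff_two_le.2 (by omega)
  let p : Option (Fin (n + 1)) → MvPolynomial (Fin (n + 1)) R := fun o => o.elim (∑ i, X i) X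
  have h := Finset.prod_dvd_of_prime_of_not_associated Finset.univ (p := p) (a := a) ?_ ?_ ?_
  · rwa [Fintype.prod_option, mul_comm] at h
  · rintro (_ | i) -
    exacts [prime_sum_X n, X_prime]
  · rintro (_ | i) - (_ | j) - hij h
    · exact hij rfl
    · exact X_not_dvd_sum_X j h.symm.dvd
    · exact X_not_dvd_sum_X i h.dvd
    · exact hij (congrArg some (X_dvd_X.1 h.dvd))
  · rintro (_ | i) -
    exacts [hsum, hX i]

end MvPolynomial

theorem stmt_15_general (n : ℕ) (hn : 1 ≤ n) (b : Fin (n+1) → ℂ) :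
    (let f : Polynomial (MvPolynomial (Fin (n+1)) ℂ) :=
      ∑ i, Polynomial.C (MvPolynomial.X i) *
        ∏ k ∈ Finset.univ.erase i, (Polynomial.X + Polynomial.C (MvPolynomial.C (b k)));
    let g : Polynomial (MvPolynomial (Fin (n+1)) ℂ) :=
      ∑ i, Polynomial.C (MvPolynomial.X i) *
        ∏ k ∈ Finset.univ.erase i, (Polynomial.X + Polynomial.C (MvPolynomial.C (b k))) ^ 2;
    ((∏ i, MvPolynomial.X i) * (∑ i, MvPolynomial.X i) :
        MvPolynomial (Fin (n+1)) ℂ) ∣ (_root_.sylvester f g n (2 * n)).det) := by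
  intro f g
  set c : Fin (n + 1) → MvPolynomial (Fin (n + 1)) ℂ := fun k => MvPolynomial.C (b k)
  have hf : f = cofactorSum MvPolynomial.X c 1 := by simp [f, cofactorSum, c]
  have hg : g = cofactorSum MvPolynomial.X c 2 := rfl
  have hdeg (e : ℕ) : (cofactorSum MvPolynomial.X c e).natDegree ≤ e * n := by
    simpa [mul_comm] using natDegree_cofactorSum_le MvPolynomial.X c e
  have hcoeff (e : ℕ) : (cofactorSum MvPolynomial.X c e).coeff (e * n) = ∑ i, MvPolynomial.X i := by
    simpa [mul_comm] using coeff_cofactorSum MvPolynomial.X c e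
  rw [hf, hg, det_sylvester_eq_resultant (by simpa using hdeg 1) (hdeg 2)]
  refine MvPolynomial.prod_X_mul_sum_X_dvd (by omega) (fun i => ?_) ?_
  · refine dvd_resultant_of_isRoot (hdeg 2) (by simpa using hdeg 1) (by omega)
      (r := -Ideal.Quotient.mk _ (c i)) ?_ ?_
    all_goals
      rw [map_cofactorSum]
      exact isRoot_cofactorSum _ (by norm_num) (Ideal.Quotient.mk_singleton_self _)
  · exact dvd_resultant_of_dvd_coeff (hdeg 2) (by simpa using hdeg 1) (by omega) (by omega)
      (hcoeff 2).symm.dvd (by simpa using (hcoeff 1).symm.dvd)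

/-- Corollary 5.4 (divisibility): for `n+1` distinct points `-b_i` on the line, the
resultant `Res_x(g1ʰ, g2ʰ)` of the homogenized critical equation and Hessian, viewed
as a polynomial in `u₀, …, u_n`, is divisible by `u₀ ⋯ u_n · (u₀ + ⋯ + u_n)`. -/
theorem stmt_15 (n : ℕ) (hn : 1 ≤ n) (b : Fin (n+1) → ℂ) (hb : Function.Injective b) :
    (let f : Polynomial (MvPolynomial (Fin (n+1)) ℂ) :=
      ∑ i, Polynomial.C (MvPolynomial.X i) *
        ∏ k ∈ Finset.univ.erase i, (Polynomial.X + Polynomial.C (MvPolynomial.C (b k)));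
    let g : Polynomial (MvPolynomial (Fin (n+1)) ℂ) :=
      ∑ i, Polynomial.C (MvPolynomial.X i) *
        ∏ k ∈ Finset.univ.erase i, (Polynomial.X + Polynomial.C (MvPolynomial.C (b k))) ^ 2;
    ((∏ i, MvPolynomial.X i) * (∑ i, MvPolynomial.X i) :
        MvPolynomial (Fin (n+1)) ℂ) ∣ (_root_.sylvester f g n (2 * n)).det) :=
  stmt_15_general n hn b
end

section
/- Let A be a (d+2) x d complex matrix whose transpose has all d x d minors nonzero, and assume the top d x d block of A (rows 0..d-1) is the identity. Suppose there exists λ ∈ C such that det(A'_{{0,...,d} \ {i}}) = λ · det(A_{{0,...,d} \ {i}}) for all i = 0, ..., d, where A' is obtained from the (d+1) x (d+2) matrix L^T = [b | A]^T-style augmentation by deleting one column different from the one deleted for A. Then the inverse of the corresponding (d+1) x (d+1) submatrix of L^T has two linearly dependent columns, a contradiction; hence no such λ exists when L is uniform. -/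
open Matrix

/-- Final step in the proof of Proposition 7.4: let `L` be a uniform
`(d+1) × (d+2)` matrix (all maximal minors nonzero), let `A` be `Lᵀ` with its
0-th column (the column `b`) removed and `A'` be `Lᵀ` with its 1-st column
removed, and assume the top `d × d` block of `A` is the identity.  Then there is
no `λ ∈ ℂ` with `det(A'_{{0,…,d}∖{i}}) = λ · det(A_{{0,…,d}∖{i}})` for all
`i = 0, …, d`: the two vectors of signed maximal minors are, by Cramer's rule,
columns of the inverse of an invertible matrix, hence not proportional. -/
theorem stmt_17 (d : ℕ) (hd : 1 ≤ d) (L : Matrix (Fin (d+1)) (Fin (d+2)) ℂ)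
    (huniform : ∀ j : Fin (d+2), (L.submatrix id j.succAbove).det ≠ 0)
    (A A' : Matrix (Fin (d+2)) (Fin d) ℂ)
    (hA : A = Lᵀ.submatrix id (Fin.succAbove (0 : Fin (d+1))))
    (hA' : A' = Lᵀ.submatrix id (Fin.succAbove (1 : Fin (d+1))))
    (hid : ∀ k j : Fin d, A (Fin.castLE (by omega) k) j = if k = j then 1 else 0) :
    ¬ ∃ lam : ℂ, ∀ i : Fin (d+1),
      (A'.submatrix (fun k : Fin d => Fin.castSucc (i.succAbove k)) id).det
        = lam * (A.submatrix (fun k : Fin d => Fin.castSucc (i.succAbove k)) id).det := by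

  rintro ⟨lam, hlam⟩
  set M : Matrix (Fin (d+1)) (Fin (d+1)) ℂ := Lᵀ.submatrix Fin.castSucc id with hM
  have h01 : (0 : Fin (d+1)) ≠ 1 := by
    refine Fin.ne_of_val_ne ?_
    rw [Fin.val_zero, Fin.val_one', Nat.mod_eq_of_lt (by omega)]
    omega
  have hdet : M.det ≠ 0 := by
    have h := huniform (Fin.last (d+1))
    have heq : L.submatrix id (Fin.last (d+1)).succAbove = Mᵀ := by
      ext i j; simp [hM, Fin.succAbove_last]
    rw [heq, Matrix.det_transpose] at h
    exact h
  have hadj : ∀ i : Fin (d+1), adjugate M 1 i = -lam * adjugate M 0 i := by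
    intro i
    have h0 : (A.submatrix (fun k : Fin d => Fin.castSucc (i.succAbove k)) id)
        = M.submatrix i.succAbove (Fin.succAbove (0 : Fin (d+1))) := by
      ext k j; simp [hA, hM]
    have h1 : (A'.submatrix (fun k : Fin d => Fin.castSucc (i.succAbove k)) id)
        = M.submatrix i.succAbove (Fin.succAbove (1 : Fin (d+1))) := by
      ext k j; simp [hA', hM]
    have e0 := Matrix.adjugate_fin_succ_eq_det_submatrix M (0 : Fin (d+1)) i
    have e1 := Matrix.adjugate_fin_succ_eq_det_submatrix M (1 : Fin (d+1)) i
    have hl := hlam i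
    rw [h0, h1] at hl
    rw [e0, e1, hl]
    have : ((-1 : ℂ)) ^ ((i : ℕ) + (0 : Fin (d+1)) : ℕ) = (-1) ^ (i : ℕ) := by norm_num
    rw [this]
    have h1v : ((1 : Fin (d+1)) : ℕ) = 1 := by
      rw [Fin.val_one']
      exact Nat.mod_eq_of_lt (by omega)
    rw [h1v]
    ring
  have hmul : (adjugate M * M) 1 1 = -lam * ((adjugate M * M) 0 1) := by
    simp only [Matrix.mul_apply, hadj, mul_assoc]
    rw [← Finset.mul_sum]
  rw [Matrix.adjugate_mul] at hmul
  simp only [Matrix.smul_apply, Matrix.one_apply_eq, Matrix.one_apply_ne h01,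
    smul_eq_mul, mul_one, mul_zero] at hmul
  exact hdet hmul
end

section
/- Let q(u0, u1, u2, u3, u4) = (u0 u3 + u0 u4 + u1 u4 + u1 u2 + u2 u4 + u3 u4 + u4^2)^2 - 4 u0 u1 u2 u3. Then q is a homogeneous polynomial of degree 4 in u0,...,u4, and q is irreducible over C. -/
/-!
As a polynomial in `u₀` over `R = ℂ[u₁, u₂, u₃, u₄]`,
`q = (u₃ + u₄)² u₀² + (2 (u₃ + u₄) y - 4 u₁u₂u₃) u₀ + y²` with
`y = u₁u₂ + u₁u₄ + u₂u₄ + u₃u₄ + u₄²`. The two leading coefficients are coprime, so `q` is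
primitive, and by Gauss's lemma it is irreducible once its discriminant is not a square in the
integrally closed ring `R`. The discriminant is
`-16 u₁u₂u₃u₄ (u₁u₂ + u₁u₃ + u₁u₄ + u₂u₃ + u₂u₄ + (u₃ + u₄)²)`, which `u₁` divides exactly once.
-/

theorem IsIntegrallyClosed.algebraMap_ne_sq {R K : Type*} [CommRing R] [CommRing K] [Algebra R K]
    [IsFractionRing R K] [IsIntegrallyClosed R] {d : R} (h : ∀ r : R, d ≠ r ^ 2) (s : K) :
    algebraMap R K d ≠ s ^ 2 := by
  intro hs
  have hint : IsIntegral R s := ⟨Polynomial.X ^ 2 - Polynomial.C d,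
    Polynomial.monic_X_pow_sub_C d two_ne_zero, by simp [hs]⟩
  obtain ⟨r, rfl⟩ := IsIntegrallyClosed.isIntegral_iff.mp hint
  exact h r (IsFractionRing.injective R K (by rw [hs, map_pow]))

namespace Polynomial

theorem isPrimitive_of_isRelPrime_coeff {R : Type*} [CommSemiring R] {p : R[X]} {i j : ℕ}
    (h : IsRelPrime (p.coeff i) (p.coeff j)) : p.IsPrimitive := fun r hr =>
  h ((C_dvd_iff_dvd_coeff r p).1 hr i) ((C_dvd_iff_dvd_coeff r p).1 hr j)

theorem irreducible_quadratic_of_discrim_ne_sq {K : Type*} [Field K] {a b c : K} (ha : a ≠ 0)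
    (h : ∀ s : K, discrim a b c ≠ s ^ 2) : Irreducible (C a * X ^ 2 + C b * X + C c) := by
  refine irreducible_of_degree_le_three_of_not_isRoot (by simp [natDegree_quadratic ha])
    fun x hx => quadratic_ne_zero_of_discrim_ne_sq h x ?_
  simpa [sq, mul_assoc] using hx

theorem irreducible_quadratic_of_isRelPrime_of_discrim_ne_sq {R : Type*} [CommRing R]
    [IsDomain R] [IsGCDMonoid R] {a b c : R} (ha : a ≠ 0) (hab : IsRelPrime a b)
    (h : ∀ s : R, discrim a b c ≠ s ^ 2) : Irreducible (C a * X ^ 2 + C b * X + C c) := by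
  have hprim : (C a * X ^ 2 + C b * X + C c).IsPrimitive :=
    isPrimitive_of_isRelPrime_coeff (i := 2) (j := 1) (by simpa using hab)
  rw [hprim.irreducible_iff_irreducible_map_fraction_map (K := FractionRing R)]
  have hinj := IsFractionRing.injective R (FractionRing R)
  have hK := IsIntegrallyClosed.algebraMap_ne_sq (K := FractionRing R) h
  simpa using irreducible_quadratic_of_discrim_ne_sq ((map_ne_zero_iff _ hinj).2 ha)
    (by simpa [discrim, map_ofNat] using hK)

end Polynomial

theorem Prime.mul_ne_sq {R : Type*} [CommMonoidWithZero R] [IsCancelMulZero R] {p e : R}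
    (hp : Prime p) (he : ¬ p ∣ e) (s : R) : p * e ≠ s ^ 2 := by
  intro hs
  obtain ⟨t, rfl⟩ := hp.dvd_of_dvd_pow (n := 2) ⟨e, hs.symm⟩
  exact he ⟨t ^ 2, mul_left_cancel₀ hp.ne_zero (by rw [hs, mul_pow, sq p, mul_assoc])⟩

theorem MvPolynomial.not_X_dvd_of_eval_ne_zero {R σ : Type*} [CommSemiring R]
    {f : MvPolynomial σ R} {i : σ} {w : σ → R} (hw : w i = 0) (hf : eval w f ≠ 0) :
    ¬ X i ∣ f := by
  rintro ⟨g, rfl⟩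
  simp [hw] at hf

open MvPolynomial

namespace M05

noncomputable def q : MvPolynomial (Fin 5) ℂ :=
  (X 0 * X 3 + X 0 * X 4 + X 1 * X 4 + X 1 * X 2 + X 2 * X 4 + X 3 * X 4 + X 4 ^ 2) ^ 2
    - 4 * (X 0 * X 1 * X 2 * X 3)

theorem q_isHomogeneous : q.IsHomogeneous 4 := by
  have hX (i : Fin 5) := isHomogeneous_X ℂ i
  have h4 : (4 : MvPolynomial (Fin 5) ℂ).IsHomogeneous 0 := by
    rw [← map_ofNat C 4]
    exact isHomogeneous_C _ _
  have hs : (X 0 * X 3 + X 0 * X 4 + X 1 * X 4 + X 1 * X 2 + X 2 * X 4 + X 3 * X 4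
      + X 4 ^ 2 : MvPolynomial (Fin 5) ℂ).IsHomogeneous 2 :=
    ((((((hX 0).mul (hX 3)).add ((hX 0).mul (hX 4))).add ((hX 1).mul (hX 4))).add
      ((hX 1).mul (hX 2))).add ((hX 2).mul (hX 4))).add ((hX 3).mul (hX 4)) |>.add ((hX 4).pow 2)
  exact (hs.pow 2).sub (h4.mul ((((hX 0).mul (hX 1)).mul (hX 2)).mul (hX 3)))

-- `finSuccEquiv` makes `u₀` the polynomial variable and renames `u_{i+1}` to `X i`.
noncomputable def y : MvPolynomial (Fin 4) ℂ :=
  X 0 * X 1 + X 0 * X 3 + X 1 * X 3 + X 2 * X 3 + X 3 ^ 2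

theorem finSuccEquiv_q : finSuccEquiv ℂ 4 q =
    Polynomial.C ((X 2 + X 3) ^ 2) * Polynomial.X ^ 2
      + Polynomial.C (2 * (X 2 + X 3) * y - 4 * (X 0 * X 1 * X 2)) * Polynomial.X
      + Polynomial.C (y ^ 2) := by
  rw [q, show (1 : Fin 5) = Fin.succ 0 from rfl, show (2 : Fin 5) = Fin.succ 1 from rfl,
    show (3 : Fin 5) = Fin.succ 2 from rfl, show (4 : Fin 5) = Fin.succ 3 from rfl]
  simp only [y, map_sub, map_add, map_mul, map_pow, map_ofNat, finSuccEquiv_X_zero,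
    finSuccEquiv_X_succ]
  ring

theorem isRelPrime_coeff :
    IsRelPrime ((X 2 + X 3) ^ 2) (2 * (X 2 + X 3) * y - 4 * (X 0 * X 1 * X 2)) := by
  have hX (i : Fin 4) (hi : i ≠ 3) : IsRelPrime (X 2 + X 3) (X i : MvPolynomial (Fin 4) ℂ) :=
    (X_prime.irreducible.isRelPrime_iff_not_dvd.2
      (not_X_dvd_of_eval_ne_zero (w := Pi.single 3 1) (Pi.single_eq_of_ne hi 1) (by simp))).symm
  have h4 : IsUnit (4 : MvPolynomial (Fin 4) ℂ) := by
    rw [← map_ofNat C 4]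
    exact (isUnit_iff_ne_zero.2 (by norm_num)).map C
  have hprod : IsRelPrime (X 2 + X 3) (-4 * (X 0 * X 1 * X 2) : MvPolynomial (Fin 4) ℂ) :=
    (isRelPrime_mul_unit_left_right h4.neg).2
      (((hX 0 (by decide)).mul_right (hX 1 (by decide))).mul_right (hX 2 (by decide)))
  refine IsRelPrime.pow_left (IsRelPrime.of_add_mul_left_right (z := -(2 * y)) ?_)
  convert hprod using 1
  ring

theorem discrim_coeff_ne_sq (s : MvPolynomial (Fin 4) ℂ) :
    discrim ((X 2 + X 3) ^ 2) (2 * (X 2 + X 3) * y - 4 * (X 0 * X 1 * X 2)) (y ^ 2) ≠ s ^ 2 := by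
  have hd : discrim ((X 2 + X 3) ^ 2) (2 * (X 2 + X 3) * y - 4 * (X 0 * X 1 * X 2)) (y ^ 2) =
      X 0 * (-16 * (X 1 * X 2 * X 3 * (X 0 * X 1 + X 0 * X 2 + X 0 * X 3 + X 1 * X 2 + X 1 * X 3
        + (X 2 + X 3) ^ 2))) := by
    rw [discrim, y]
    ring
  rw [hd]
  exact X_prime.mul_ne_sq
    (not_X_dvd_of_eval_ne_zero (w := ![0, 1, 1, 1]) rfl (by simp [Matrix.cons_val]; norm_num)) s

theorem irreducible_q : Irreducible q := by
  have ha : ((X 2 + X 3) ^ 2 : MvPolynomial (Fin 4) ℂ) ≠ 0 := fun h => by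
    simpa using congrArg (eval 1) h
  rw [← MulEquiv.irreducible_iff (finSuccEquiv ℂ 4).toMulEquiv]
  change Irreducible (finSuccEquiv ℂ 4 q)
  rw [finSuccEquiv_q]
  exact Polynomial.irreducible_quadratic_of_isRelPrime_of_discrim_ne_sq ha isRelPrime_coeff
    discrim_coeff_ne_sq

end M05

/-- The logarithmic discriminant polynomial of `M_{0,5}` is homogeneous of degree 4
and irreducible over `ℂ`. -/
theorem stmt_19 :
    (let q : MvPolynomial (Fin 5) ℂ :=
      (X 0 * X 3 + X 0 * X 4 + X 1 * X 4 + X 1 * X 2 + X 2 * X 4 + X 3 * X 4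
        + X 4 ^ 2) ^ 2 - 4 * (X 0 * X 1 * X 2 * X 3);
    q.IsHomogeneous 4 ∧ Irreducible q) :=
  ⟨M05.q_isHomogeneous, M05.irreducible_q⟩
end
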